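/- arXiv:1610.09596 — 6 statements merged into one kernel-verified Lean document; each statement's English description precedes it below -/
import Mathlib

section
/- Let m, n, p, q ∈ ℕ with 1 ≤ m < n, 1 ≤ p < q, let α, β, γ, δ ∈ ℂ, and set φ(z) := α z^n + β z^m + γ z̄^p + δ z̄^q. For every k ∈ ℕ with k ≥ max{n, q}, one has Σ_{j=0}^∞ (j+1)·|∫_𝔻 φ(z) z^k · conj(z^j) dA(z)|² − Σ_{j=0}^∞ (j+1)·|∫_𝔻 conj(φ(z)) z^k · conj(z^j) dA(z)|² = (1/(k+1)²)·( |α|²n²/(k+n+1) + |β|²m²/(k+m+1) − |γ|²p²/(k+p+1) − |δ|²q²/(k+q+1) ). (The left-hand side equals ⟨[T_φ*, T_φ] z^k, z^k⟩ = ‖P(φ z^k)‖² − ‖P(φ̄ z^k)‖² for the Toeplitz operator T_φ on the Bergman space.) -/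
/-!
In polar coordinates `z^a z̄^b = r^(a+b) e^{i(a-b)θ}`, so the monomials are orthogonal for `dA`:
`∫ z^a z̄^b dA = δ_{ab}/(a+1)`. Hence the coefficients of `φ z^k` against `z^j` vanish except at
the four degrees `k+n, k+m, k-p, k-q`, where they are `α/(k+n+1), β/(k+m+1), γ/(k+1), δ/(k+1)`;
these degrees are distinct because `m < n`, `p < q` and `1 ≤ m`, and they do not truncate in `ℕ`
because `q ≤ k`. The same holds for `φ̄ z^k` with the roles of `z` and `z̄` exchanged, and the
difference of the two weighted sums `Σ (j+1)|coefficient|²` is the stated expression.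
-/

open MeasureTheory Complex Metric

/-- The normalized area measure on the open unit disk `𝔻 ⊆ ℂ`. -/
noncomputable def dA : Measure ℂ :=
  (ENNReal.ofReal (Real.pi)⁻¹) • (volume.restrict (ball (0 : ℂ) 1))

open Set Function ComplexConjugate
open scoped Real

theorem integral_exp_int_mul_mul_I (t : ℤ) :
    ∫ θ in -π..π, exp (t * θ * I) = if t = 0 then (2 * π : ℂ) else 0 := by
  split_ifs with ht
  · simp only [ht, Int.cast_zero, zero_mul, Complex.exp_zero, intervalIntegral.integral_const,
      sub_neg_eq_add, Complex.real_smul, mul_one]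
    push_cast; ring
  · have hc : (t * I : ℂ) ≠ 0 := by simp [ht]
    have hperiod : exp (t * I * π) = exp (t * I * (-π : ℝ)) := by
      rw [← mul_one (exp (t * I * (-π : ℝ))), ← exp_int_mul_two_pi_mul_I t, ← Complex.exp_add]
      push_cast; ring_nf
    simp_rw [mul_right_comm _ _ I]
    rw [integral_exp_mul_complex hc, hperiod, sub_self, zero_div]

theorem setIntegral_ball_zero_eq_integral_polarCoord {E : Type*} [NormedAddCommGroup E]
    [NormedSpace ℝ E] (f : ℂ → E) (R : ℝ) :
    ∫ z in ball (0 : ℂ) R, f z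
      = ∫ p in Ioo 0 R ×ˢ Ioo (-π) π, p.1 • f (Complex.polarCoord.symm p) := by
  have hsets : Ioo 0 R ×ˢ Ioo (-π) π = Iio R ×ˢ univ ∩ polarCoord.target := by
    ext ⟨r, θ⟩; simp [polarCoord_target]; tauto
  rw [← integral_indicator measurableSet_ball, ← Complex.integral_comp_polarCoord_symm, hsets,
    ← Measure.restrict_restrict (measurableSet_Iio.prod MeasurableSet.univ),
    ← integral_indicator (measurableSet_Iio.prod MeasurableSet.univ)]
  refine setIntegral_congr_fun polarCoord.open_target.measurableSet fun p hp => ?_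
  have hr : 0 < p.1 := hp.1
  by_cases h : p.1 < R <;> simp [indicator, h, abs_of_pos hr]

theorem polarCoord_symm_pow_mul_conj_pow (p : ℝ × ℝ) (a b : ℕ) :
    Complex.polarCoord.symm p ^ a * conj (Complex.polarCoord.symm p) ^ b
      = (p.1 : ℂ) ^ (a + b) * exp (((a : ℤ) - b : ℤ) * p.2 * I) := by
  have hpolar : Complex.polarCoord.symm p = p.1 * exp (p.2 * I) := by
    rw [Complex.polarCoord_symm_apply, Complex.exp_mul_I]; push_cast; ring
  rw [hpolar, map_mul, conj_ofReal, ← Complex.exp_conj, map_mul, conj_ofReal, conj_I, mul_pow,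
    mul_pow, ← Complex.exp_nat_mul, ← Complex.exp_nat_mul, mul_mul_mul_comm, ← pow_add,
    ← Complex.exp_add]
  push_cast; ring_nf

theorem integral_ball_pow_mul_conj_pow (a b : ℕ) :
    ∫ z in ball (0 : ℂ) 1, z ^ a * conj z ^ b = if a = b then (π / (a + 1) : ℂ) else 0 := by
  have hradial : ∫ r in Ioo (0 : ℝ) 1, (r : ℂ) ^ (a + b + 1) = ((a + b + 2 : ℕ) : ℂ)⁻¹ := by
    rw [← integral_Ioc_eq_integral_Ioo, ← intervalIntegral.integral_of_le zero_le_one]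
    simp_rw [← ofReal_pow]
    rw [intervalIntegral.integral_ofReal, integral_pow]
    push_cast; ring
  rw [setIntegral_ball_zero_eq_integral_polarCoord]
  simp_rw [polarCoord_symm_pow_mul_conj_pow, Complex.real_smul, ← mul_assoc, ← pow_succ']
  rw [Measure.volume_eq_prod, setIntegral_prod_mul (fun r : ℝ => (r : ℂ) ^ (a + b + 1))
    (fun θ : ℝ => exp (((a : ℤ) - b : ℤ) * θ * I)), hradial, ← integral_Ioc_eq_integral_Ioo,
    ← intervalIntegral.integral_of_le (by linarith [Real.pi_pos]), integral_exp_int_mul_mul_I]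
  by_cases hab : a = b
  · subst hab
    rw [sub_self, if_pos rfl, if_pos rfl]
    have ha : ((a + a + 2 : ℕ) : ℂ) = 2 * (a + 1) := by push_cast; ring
    have ha' : (a : ℂ) + 1 ≠ 0 := by norm_cast
    rw [ha]
    field_simp
  · rw [if_neg (by omega), if_neg hab, mul_zero]

theorem integral_pow_mul_conj_pow_dA (a b : ℕ) :
    ∫ z, z ^ a * conj z ^ b ∂dA = if a = b then ((a : ℂ) + 1)⁻¹ else 0 := by
  rw [dA, integral_smul_measure, integral_ball_pow_mul_conj_pow,
    ENNReal.toReal_ofReal (by positivity)]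
  split_ifs
  · have hπ : (π : ℂ) ≠ 0 := ofReal_ne_zero.mpr Real.pi_ne_zero
    rw [Complex.real_smul]; push_cast; field_simp
  · exact smul_zero _

theorem integrable_pow_mul_conj_pow_dA (a b : ℕ) :
    Integrable (fun z : ℂ => z ^ a * conj z ^ b) dA := by
  have hcont : Continuous fun z : ℂ => z ^ a * conj z ^ b := by fun_prop
  exact ((hcont.continuousOn.integrableOn_compact (isCompact_closedBall 0 1)).mono_set
    ball_subset_closedBall).smul_measure ENNReal.ofReal_ne_top

section Monomials

variable {ι : Type*} [Fintype ι]

theorem integral_sum_monomials_mul_pow_mul_conj_pow (c : ι → ℂ) (a b : ι → ℕ) {k : ℕ}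
    (hb : ∀ i, b i ≤ k + a i) (j : ℕ) :
    ∫ z, (∑ i, c i * z ^ a i * conj z ^ b i) * z ^ k * conj (z ^ j) ∂dA
      = ∑ i, if k + a i - b i = j then c i / ((k + a i : ℕ) + 1) else 0 := by
  have hexpand : ∀ z : ℂ, (∑ i, c i * z ^ a i * conj z ^ b i) * z ^ k * conj (z ^ j)
      = ∑ i, c i * (z ^ (k + a i) * conj z ^ (b i + j)) := fun z => by
    simp only [Finset.sum_mul, map_pow, pow_add]; congr 1; ext i; ring
  simp_rw [hexpand]
  rw [integral_finsetSum _ fun i _ => (integrable_pow_mul_conj_pow_dA _ _).const_mul (c i)]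
  refine Finset.sum_congr rfl fun i _ => ?_
  rw [integral_const_mul, integral_pow_mul_conj_pow_dA]
  have hiff : k + a i = b i + j ↔ k + a i - b i = j := by have := hb i; omega
  simp only [hiff]
  split_ifs <;> simp [div_eq_mul_inv]

theorem tsum_mul_norm_sq_sum_ite_eq {d : ι → ℕ} (hd : Injective d) (e : ι → ℂ) (w : ℕ → ℝ) :
    ∑' j, w j * ‖∑ i, if d i = j then e i else 0‖ ^ 2 = ∑ i, w (d i) * ‖e i‖ ^ 2 := by
  classical
  rw [tsum_eq_sum (s := Finset.univ.image d), Finset.sum_image fun i _ i' _ h => hd h]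
  · simp_rw [hd.eq_iff, Finset.sum_ite_eq', Finset.mem_univ, if_true]
  · intro j hj
    have hne : ∀ i, d i ≠ j := fun i h => hj (Finset.mem_image.mpr ⟨i, Finset.mem_univ _, h⟩)
    simp [hne]

theorem tsum_succ_mul_norm_integral_sq_of_eq_sum_monomials (c : ι → ℂ) (a b : ι → ℕ) {k : ℕ}
    (hb : ∀ i, b i ≤ k + a i) (hab : Injective fun i => (a i : ℤ) - b i) {f : ℂ → ℂ}
    (hf : ∀ z, f z = ∑ i, c i * z ^ a i * conj z ^ b i) :
    ∑' j : ℕ, ((j : ℝ) + 1) * ‖∫ z, f z * z ^ k * conj (z ^ j) ∂dA‖ ^ 2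
      = ∑ i, ((k : ℝ) + a i - b i + 1) * ‖c i‖ ^ 2 / ((k : ℝ) + a i + 1) ^ 2 := by
  have hd : Injective fun i => k + a i - b i := fun i i' h => hab <| by
    have := hb i; have := hb i'; simp only at h ⊢; omega
  simp_rw [hf, integral_sum_monomials_mul_pow_mul_conj_pow c a b hb]
  rw [tsum_mul_norm_sq_sum_ite_eq hd]
  refine Finset.sum_congr rfl fun i _ => ?_
  rw [norm_div, Nat.cast_sub (hb i)]
  norm_cast
  push_cast
  field_simp

end Monomials

theorem statement4_general (m n p q : ℕ) (hm : 1 ≤ m) (hmn : m < n) (hpq : p < q)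
    (α β γ δ : ℂ) (φ : ℂ → ℂ)
    (hφ : ∀ z : ℂ, φ z = α * z ^ n + β * z ^ m
        + γ * (starRingEnd ℂ z) ^ p + δ * (starRingEnd ℂ z) ^ q)
    (k : ℕ) (hk : max n q ≤ k) :
    (∑' j : ℕ, ((j : ℝ) + 1)
        * ‖∫ z : ℂ, φ z * z ^ k * (starRingEnd ℂ (z ^ j)) ∂dA‖ ^ 2)
      - (∑' j : ℕ, ((j : ℝ) + 1)
        * ‖∫ z : ℂ, (starRingEnd ℂ (φ z)) * z ^ k
            * (starRingEnd ℂ (z ^ j)) ∂dA‖ ^ 2)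
    = (1 / ((k : ℝ) + 1) ^ 2)
      * (‖α‖ ^ 2 * (n : ℝ) ^ 2 / ((k : ℝ) + (n : ℝ) + 1)
        + ‖β‖ ^ 2 * (m : ℝ) ^ 2 / ((k : ℝ) + (m : ℝ) + 1)
        - ‖γ‖ ^ 2 * (p : ℝ) ^ 2 / ((k : ℝ) + (p : ℝ) + 1)
        - ‖δ‖ ^ 2 * (q : ℝ) ^ 2 / ((k : ℝ) + (q : ℝ) + 1)) := by
  have hnk : n ≤ k := le_of_max_le_left hk
  have hqk : q ≤ k := le_of_max_le_right hk
  rw [tsum_succ_mul_norm_integral_sq_of_eq_sum_monomials ![α, β, γ, δ] ![n, m, 0, 0] ![0, 0, p, q]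
      (by intro i; fin_cases i <;> simp <;> omega)
      (by intro i i' h; fin_cases i <;> fin_cases i' <;> simp at h ⊢ <;> omega)
      (by simp [hφ, Fin.sum_univ_four]),
    tsum_succ_mul_norm_integral_sq_of_eq_sum_monomials (conj ∘ ![α, β, γ, δ]) ![0, 0, p, q]
      ![n, m, 0, 0]
      (by intro i; fin_cases i <;> simp <;> omega)
      (by intro i i' h; fin_cases i <;> fin_cases i' <;> simp at h ⊢ <;> omega)
      (by simp [hφ, Fin.sum_univ_four])]
  simp only [Nat.succ_eq_add_one, Nat.reduceAdd, Fin.sum_univ_four, Fin.isValue,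
    Matrix.cons_val_zero, CharP.cast_eq_zero, sub_zero, Matrix.cons_val_one, Matrix.cons_val,
    add_zero, comp_apply, RCLike.norm_conj, one_div]
  field_simp
  ring

/-- The diagonal entry A₀₀ = ⟨[T_φ*, T_φ] z^k, z^k⟩ = ‖P(φ z^k)‖² - ‖P(φ̄ z^k)‖²
for φ = α z^n + β z^m + γ z̄^p + δ z̄^q. -/
theorem statement4 (m n p q : ℕ) (hm : 1 ≤ m) (hmn : m < n) (hp : 1 ≤ p) (hpq : p < q)
    (α β γ δ : ℂ) (φ : ℂ → ℂ)
    (hφ : ∀ z : ℂ, φ z = α * z ^ n + β * z ^ m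
        + γ * (starRingEnd ℂ z) ^ p + δ * (starRingEnd ℂ z) ^ q)
    (k : ℕ) (hk : max n q ≤ k) :
    (∑' j : ℕ, ((j : ℝ) + 1)
        * ‖∫ z : ℂ, φ z * z ^ k * (starRingEnd ℂ (z ^ j)) ∂dA‖ ^ 2)
      - (∑' j : ℕ, ((j : ℝ) + 1)
        * ‖∫ z : ℂ, (starRingEnd ℂ (φ z)) * z ^ k
            * (starRingEnd ℂ (z ^ j)) ∂dA‖ ^ 2)
    = (1 / ((k : ℝ) + 1) ^ 2)
      * (‖α‖ ^ 2 * (n : ℝ) ^ 2 / ((k : ℝ) + (n : ℝ) + 1)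
        + ‖β‖ ^ 2 * (m : ℝ) ^ 2 / ((k : ℝ) + (m : ℝ) + 1)
        - ‖γ‖ ^ 2 * (p : ℝ) ^ 2 / ((k : ℝ) + (p : ℝ) + 1)
        - ‖δ‖ ^ 2 * (q : ℝ) ^ 2 / ((k : ℝ) + (q : ℝ) + 1)) :=
  statement4_general m n p q hm hmn hpq α β γ δ φ hφ k hk
end

section
/- Let a ∈ ℝ and ρ ∈ ℂ, and let Q be the bounded linear operator on ℓ²(ℕ, ℂ) given by (Qx)₀ = a·x₀ + ρ·x₁ and (Qx)_j = conj(ρ)·x_{j−1} + a·x_j + ρ·x_{j+1} for j ≥ 1. If Q is positive, i.e. ⟨Qx, x⟩ is a nonnegative real number for every x ∈ ℓ²(ℕ, ℂ), then a ≥ 2|ρ|. -/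
/-!
Test positivity on the truncated geometric vectors `x_j = u ^ j` (`j ≤ m`), where `|u| = 1` is
chosen so that `ρ u = -|ρ|`. In the interior the recurrence acts on such a vector as
multiplication by `a + ρ u + conj (ρ u) = a - 2|ρ|`; each of the two ends misses one neighbour
and gets `|ρ|` back. Hence `⟨Qx, x⟩ = (m + 1) a - 2 m |ρ| ≥ 0` for every `m`, which forces
`a ≥ 2|ρ|`.
-/

open Complex ComplexConjugate

theorem exists_norm_eq_one_mul_eq_neg_norm (ρ : ℂ) : ∃ u : ℂ, ‖u‖ = 1 ∧ ρ * u = -‖ρ‖ := by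
  refine ⟨-exp ((-arg ρ : ℝ) * I), by rw [norm_neg, norm_exp_ofReal_mul_I], ?_⟩
  conv_lhs => rw [← norm_mul_exp_arg_mul_I ρ]
  rw [mul_neg, mul_assoc, ← exp_add]
  simp

theorem nonneg_of_forall_nat_mul_add_nonneg {c d : ℝ} (h : ∀ m : ℕ, 0 ≤ m * c + d) : 0 ≤ c := by
  by_contra! hc
  obtain ⟨m, hm⟩ := exists_nat_gt (d / -c)
  rw [div_lt_iff₀ (neg_pos.mpr hc)] at hm
  linarith [h m]

theorem lp.inner_eq_sum_of_forall_notMem {𝕜 ι : Type*} [RCLike 𝕜] {G : ι → Type*}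
    [∀ i, NormedAddCommGroup (G i)] [∀ i, InnerProductSpace 𝕜 (G i)] (f g : lp G 2)
    {s : Finset ι} (hg : ∀ i ∉ s, g i = 0) :
    inner 𝕜 f g = ∑ i ∈ s, inner 𝕜 (f i) (g i) := by
  rw [lp.inner_eq_tsum, tsum_eq_sum fun i hi => by rw [hg i hi, inner_zero_right]]

noncomputable def truncGeom (u : ℂ) (n : ℕ) : lp (fun _ : ℕ => ℂ) 2 :=
  ⟨fun j => if j < n then u ^ j else 0,
    (memℓp_zero ((Set.finite_lt_nat n).subset fun j hj => by
      by_contra h; exact hj (if_neg h))).of_exponent_ge bot_le⟩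

theorem truncGeom_apply (u : ℂ) (n j : ℕ) :
    (truncGeom u n : ℕ → ℂ) j = if j < n then u ^ j else 0 :=
  rfl

section TridiagonalToeplitz

variable {a : ℝ} {ρ : ℂ} {Q : lp (fun _ : ℕ => ℂ) 2 →L[ℂ] lp (fun _ : ℕ => ℂ) 2}
    (hQ0 : ∀ x : lp (fun _ : ℕ => ℂ) 2, (Q x : ∀ _ : ℕ, ℂ) 0
        = (a : ℂ) * (x : ∀ _ : ℕ, ℂ) 0 + ρ * (x : ∀ _ : ℕ, ℂ) 1)
    (hQ : ∀ x : lp (fun _ : ℕ => ℂ) 2, ∀ j : ℕ, 1 ≤ j →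
        (Q x : ∀ _ : ℕ, ℂ) j
          = (starRingEnd ℂ ρ) * (x : ∀ _ : ℕ, ℂ) (j - 1)
            + (a : ℂ) * (x : ∀ _ : ℕ, ℂ) j + ρ * (x : ∀ _ : ℕ, ℂ) (j + 1))
    {u : ℂ} (hu : ‖u‖ = 1) (hρu : ρ * u = -‖ρ‖)
include hQ0 hQ hu hρu

theorem apply_truncGeom (m : ℕ) {j : ℕ} (hj : j ≤ m) :
    (Q (truncGeom u (m + 1)) : ℕ → ℂ) j
      = ((a - 2 * ‖ρ‖ + (if j = 0 then ‖ρ‖ else 0) + (if j = m then ‖ρ‖ else 0) : ℝ) : ℂ)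
          * u ^ j := by
  have hconj : conj ρ = -‖ρ‖ * u := by
    have h := congrArg conj hρu
    rw [map_mul, map_neg, conj_ofReal] at h
    have hcu : conj u * u = 1 := by rw [conj_mul', hu]; simp
    linear_combination u * h - conj ρ * hcu
  rcases j with _ | k
  · rw [hQ0, truncGeom_apply, truncGeom_apply]
    split_ifs <;> push_cast <;> first | omega | ring1 | linear_combination hρu
  · rw [hQ _ _ (by omega), truncGeom_apply, truncGeom_apply, truncGeom_apply, Nat.add_sub_cancel,
      if_neg k.succ_ne_zero, hconj]
    split_ifs <;> push_cast <;> first | omega | ring1 | linear_combination u ^ (k + 1) * hρu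

theorem inner_apply_truncGeom (m : ℕ) :
    inner ℂ (Q (truncGeom u (m + 1))) (truncGeom u (m + 1))
      = (((m + 1) * a - 2 * m * ‖ρ‖ : ℝ) : ℂ) := by
  have hunit : ∀ j : ℕ, conj (u ^ j) * u ^ j = 1 := fun j => by
    rw [conj_mul', norm_pow, hu]; simp
  rw [lp.inner_eq_sum_of_forall_notMem _ _ (s := Finset.range (m + 1)) fun j hj => by
    rw [truncGeom_apply, if_neg (by simpa using hj)]]
  rw [Finset.sum_congr rfl fun j hj => by
    rw [RCLike.inner_apply, apply_truncGeom hQ0 hQ hu hρu m (Finset.mem_range_succ_iff.mp hj),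
      truncGeom_apply, if_pos (Finset.mem_range.mp hj), map_mul, conj_ofReal, mul_comm,
      mul_assoc, hunit, mul_one]]
  rw [← ofReal_sum]
  congr 1
  simp [Finset.sum_add_distrib]
  ring

end TridiagonalToeplitz

/-- If the infinite tridiagonal Toeplitz matrix with diagonal `a`, superdiagonal `ρ`
and subdiagonal `conj ρ` is a positive operator on ℓ²(ℕ, ℂ), then a ≥ 2|ρ|. -/
theorem statement9 (a : ℝ) (ρ : ℂ)
    (Q : lp (fun _ : ℕ => ℂ) 2 →L[ℂ] lp (fun _ : ℕ => ℂ) 2)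
    (hQ0 : ∀ x : lp (fun _ : ℕ => ℂ) 2, (Q x : ∀ _ : ℕ, ℂ) 0
        = (a : ℂ) * (x : ∀ _ : ℕ, ℂ) 0 + ρ * (x : ∀ _ : ℕ, ℂ) 1)
    (hQ : ∀ x : lp (fun _ : ℕ => ℂ) 2, ∀ j : ℕ, 1 ≤ j →
        (Q x : ∀ _ : ℕ, ℂ) j
          = (starRingEnd ℂ ρ) * (x : ∀ _ : ℕ, ℂ) (j - 1)
            + (a : ℂ) * (x : ∀ _ : ℕ, ℂ) j + ρ * (x : ∀ _ : ℕ, ℂ) (j + 1))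
    (hpos : ∀ x : lp (fun _ : ℕ => ℂ) 2,
        0 ≤ (inner ℂ (Q x) x : ℂ).re ∧ (inner ℂ (Q x) x : ℂ).im = 0) :
    2 * ‖ρ‖ ≤ a := by
  obtain ⟨u, hu, hρu⟩ := exists_norm_eq_one_mul_eq_neg_norm ρ
  have hform : ∀ m : ℕ, 0 ≤ m * (a - 2 * ‖ρ‖) + a := fun m => by
    have h := (hpos (truncGeom u (m + 1))).1
    rw [inner_apply_truncGeom hQ0 hQ hu hρu m, ofReal_re] at h
    linarith
  linarith [nonneg_of_forall_nat_mul_add_nonneg hform]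
end

section
/- Let α ∈ ℂ. The following are equivalent: (i) for every sequence (b_n)_{n≥0} of complex numbers with Σ_{n=0}^∞ |b_n|²/(n+1) < ∞, one has |α|²·Σ_{n=0}^∞ |b_n|²/(n+2) + Σ_{n=2}^∞ |b_n|²·(n−1)/(n+1)² ≥ |α|²·Σ_{n=1}^∞ |b_n|²·n/(n+1)² + Σ_{n=0}^∞ |b_n|²/(n+3); (ii) |α| ≥ 2. (Condition (i) is exactly the hyponormality of the Toeplitz operator T_{z̄² + αz} on the Bergman space A²(𝔻), where f = Σ b_n z^n ∈ A²(𝔻); in particular T_{z̄² + 2z} is hyponormal on A²(𝔻).) -/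
/-!
With `a n = |b n|²` and `t = |α|²`, the right side of (i) minus the left side is
`∑ a n * w_t(n)` for explicit weights: `w_t(0) = t/2 - 1/3`, `w_t(1) = t/12 - 1/4` and
`w_t(n + 2) = (t (n + 5) - 4 (n + 4)) / ((n + 3)² (n + 4) (n + 5))`.
So (i) holds iff every weight is nonnegative (test (i) on `b = e_m`), iff `t ≥ 4`, since
`4 (n + 4) / (n + 5) → 4`.
-/

open Complex

noncomputable def shiftTwoCoeff (n : ℕ) : ℝ :=
  if 2 ≤ n then ((n : ℝ) - 1) / ((n : ℝ) + 1) ^ 2 else 0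

noncomputable def hyponormalityWeight (t : ℝ) (n : ℕ) : ℝ :=
  t * (1 / ((n : ℝ) + 2) - n / ((n : ℝ) + 1) ^ 2) + shiftTwoCoeff n - 1 / ((n : ℝ) + 3)

lemma hyponormalityWeight_zero (t : ℝ) : hyponormalityWeight t 0 = t / 2 - 1 / 3 := by
  norm_num [hyponormalityWeight, shiftTwoCoeff]
  ring

lemma hyponormalityWeight_one (t : ℝ) : hyponormalityWeight t 1 = t / 12 - 1 / 4 := by
  norm_num [hyponormalityWeight, shiftTwoCoeff]
  ring

lemma hyponormalityWeight_add_two (t : ℝ) (n : ℕ) :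
    hyponormalityWeight t (n + 2)
      = (t * (n + 5) - 4 * (n + 4)) / (((n : ℝ) + 3) ^ 2 * (n + 4) * (n + 5)) := by
  simp only [hyponormalityWeight, shiftTwoCoeff, le_add_iff_nonneg_left, zero_le, if_true]
  push_cast
  field_simp
  ring

lemma hyponormalityWeight_nonneg_iff (t : ℝ) : (∀ n, 0 ≤ hyponormalityWeight t n) ↔ 4 ≤ t := by
  constructor
  · intro h
    have tail (n : ℕ) : 4 * ((n : ℝ) + 4) ≤ t * (n + 5) := by
      have := h (n + 2)
      rw [hyponormalityWeight_add_two, div_nonneg_iff] at this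
      rcases this with ⟨hnum, -⟩ | ⟨-, hden⟩
      · linarith
      · exact absurd hden (not_le.2 (by positivity))
    by_contra! ht
    obtain ⟨n, hn⟩ := exists_nat_gt (4 / (4 - t))
    rw [div_lt_iff₀ (by linarith)] at hn
    nlinarith [tail n]
  · intro ht n
    match n with
    | 0 => rw [hyponormalityWeight_zero]; linarith
    | 1 => rw [hyponormalityWeight_one]; linarith
    | n + 2 =>
      rw [hyponormalityWeight_add_two]
      have : (4 : ℝ) * (n + 5) ≤ t * (n + 5) := by gcongr
      exact div_nonneg (by linarith) (by positivity)

section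

variable {a : ℕ → ℝ}

lemma tsum_shift_two_eq :
    ∑' n : ℕ, a (n + 2) * ((n : ℝ) + 1) / ((n : ℝ) + 3) ^ 2
      = ∑' n : ℕ, a n * shiftTwoCoeff n := by
  have hsupp : (fun n => a n * shiftTwoCoeff n).support ⊆ Set.range (· + 2) := fun n hn => by
    have : 2 ≤ n := by by_contra h; simp [shiftTwoCoeff, h] at hn
    exact ⟨n - 2, Nat.sub_add_cancel this⟩
  calc _ = ∑' n : ℕ, a (n + 2) * shiftTwoCoeff (n + 2) := tsum_congr fun n => by
          simp only [shiftTwoCoeff, le_add_iff_nonneg_left, zero_le, if_true]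
          push_cast
          ring
    _ = _ := (add_left_injective 2).tsum_eq hsupp

lemma summable_mul_of_abs_le (ha : Summable fun n : ℕ => a n / ((n : ℝ) + 1))
    {c : ℕ → ℝ} (hc : ∀ n : ℕ, |c n| ≤ 1 / ((n : ℝ) + 1)) : Summable fun n => a n * c n :=
  ha.abs.of_norm_bounded fun n => by
    rw [Real.norm_eq_abs, abs_mul, abs_div, abs_of_pos (by positivity : (0 : ℝ) < n + 1),
      div_eq_mul_one_div]
    exact mul_le_mul_of_nonneg_left (hc n) (abs_nonneg _)

lemma sides_sub_eq_tsum_mul_hyponormalityWeight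
    (ha : Summable fun n : ℕ => a n / ((n : ℝ) + 1)) (t : ℝ) :
    (t * (∑' n : ℕ, a n / ((n : ℝ) + 2))
        + ∑' n : ℕ, a (n + 2) * ((n : ℝ) + 1) / ((n : ℝ) + 3) ^ 2)
      - (t * (∑' n : ℕ, a n * (n : ℝ) / ((n : ℝ) + 1) ^ 2) + ∑' n : ℕ, a n / ((n : ℝ) + 3))
      = ∑' n : ℕ, a n * hyponormalityWeight t n := by
  have hpos (n : ℕ) : (0 : ℝ) < n + 1 := by positivity
  have hinv {k : ℝ} (hk : 1 ≤ k) (n : ℕ) : |1 / ((n : ℝ) + k)| ≤ 1 / ((n : ℝ) + 1) := by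
    rw [abs_of_pos (one_div_pos.2 (by linarith [hpos n]))]
    gcongr
  have h2 : Summable fun n : ℕ => a n / ((n : ℝ) + 2) := by
    simpa only [mul_one_div] using summable_mul_of_abs_le ha (hinv one_le_two)
  have h3 : Summable fun n : ℕ => a n / ((n : ℝ) + 3) := by
    simpa only [mul_one_div] using summable_mul_of_abs_le ha (hinv (by norm_num : (1 : ℝ) ≤ 3))
  have hmid : Summable fun n : ℕ => a n * (n : ℝ) / ((n : ℝ) + 1) ^ 2 := by
    simpa only [mul_div_assoc] using
      summable_mul_of_abs_le ha (c := fun n => (n : ℝ) / ((n : ℝ) + 1) ^ 2) fun n => by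
        rw [abs_of_nonneg (by positivity), div_le_div_iff₀ (by positivity) (hpos n)]
        nlinarith
  have hshift : Summable fun n : ℕ => a n * shiftTwoCoeff n :=
    summable_mul_of_abs_le ha fun n => by
      unfold shiftTwoCoeff
      split_ifs with hn
      · have : (2 : ℝ) ≤ n := by exact_mod_cast hn
        rw [abs_of_nonneg (div_nonneg (by linarith) (by positivity)),
          div_le_div_iff₀ (by positivity) (hpos n)]
        nlinarith
      · simpa using (hpos n).le
  have hsum := ((h2.hasSum.mul_left t).add hshift.hasSum).sub
    ((hmid.hasSum.mul_left t).add h3.hasSum)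
  rw [tsum_shift_two_eq, ← hsum.tsum_eq]
  exact tsum_congr fun n => by simp only [hyponormalityWeight]; ring

end

lemma norm_sq_single_one (m n : ℕ) :
    ‖(Pi.single m 1 : ℕ → ℂ) n‖ ^ 2 = if n = m then 1 else 0 := by
  by_cases h : n = m <;> simp [h]

/-- Hyponormality of T_{z̄² + αz} on the Bergman space, expressed through the
coefficient inequality, holds if and only if |α| ≥ 2. -/
theorem statement13 (α : ℂ) :
    (∀ b : ℕ → ℂ, Summable (fun n : ℕ => ‖b n‖ ^ 2 / ((n : ℝ) + 1)) →
      ‖α‖ ^ 2 * (∑' n : ℕ, ‖b n‖ ^ 2 * (n : ℝ) / ((n : ℝ) + 1) ^ 2)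
          + (∑' n : ℕ, ‖b n‖ ^ 2 / ((n : ℝ) + 3))
        ≤ ‖α‖ ^ 2 * (∑' n : ℕ, ‖b n‖ ^ 2 / ((n : ℝ) + 2))
          + ∑' n : ℕ, ‖b (n + 2)‖ ^ 2 * ((n : ℝ) + 1) / ((n : ℝ) + 3) ^ 2)
    ↔ 2 ≤ ‖α‖ := by
  rw [← pow_le_pow_iff_left₀ zero_le_two (norm_nonneg α) two_ne_zero,
    show (2 : ℝ) ^ 2 = 4 by norm_num, ← hyponormalityWeight_nonneg_iff]
  constructor
  · intro H m
    have hsingle : Summable fun n : ℕ => ‖(Pi.single m 1 : ℕ → ℂ) n‖ ^ 2 / ((n : ℝ) + 1) :=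
      summable_of_ne_finset_zero (s := {m}) fun n hn => by simp_all
    have := sub_nonneg.2 (H _ hsingle)
    rw [sides_sub_eq_tsum_mul_hyponormalityWeight hsingle] at this
    simpa [norm_sq_single_one] using this
  · intro hw b hb
    rw [← sub_nonneg, sides_sub_eq_tsum_mul_hyponormalityWeight hb]
    exact tsum_nonneg fun n => mul_nonneg (sq_nonneg _) (hw n)
end

section
/- Let f, g be holomorphic functions on the open unit disk 𝔻 ⊆ ℂ and let a, b ∈ ℂ. If the function z ↦ a·( f(z) + conj(g(z)) ) + b·conj( f(z) + conj(g(z)) ) is constant on 𝔻, then (|a|² − |b|²)·f′(z) = 0 for every z ∈ 𝔻; in particular, if |a| ≠ |b| then f is constant on 𝔻. -/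
/-!
The constant function can be regrouped as `F + conj G` with `F = a f + b g` and
`G = conj b f + conj a g`, both holomorphic. A holomorphic plus an antiholomorphic function is
locally constant only if both derivatives vanish, and then
`(|a|² - |b|²) f' = conj a F' - b G' = 0`.
-/

open Complex Metric ComplexConjugate Filter Topology

namespace Complex

lemma eq_zero_of_forall_mul_add_conj_mul_eq_zero {p q : ℂ}
    (h : ∀ v : ℂ, v * p + conj (v * q) = 0) : p = 0 ∧ q = 0 := by
  have h₁ := h 1
  have h₂ := h I
  simp only [one_mul, map_mul, conj_I] at h₁ h₂
  have hp : p = 0 := by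
    have : I * (2 * p) = 0 := by linear_combination I * h₁ + h₂
    simpa [I_ne_zero] using this
  refine ⟨hp, ?_⟩
  rwa [hp, zero_add, map_eq_zero] at h₁

/-- The `ℝ`-derivative of `F + conj ∘ G` is `v ↦ v F' + conj (v G')`, which must vanish. -/
lemma HasDerivAt.eq_zero_of_add_conj_eventuallyEq_const {F G : ℂ → ℂ} {F' G' z C : ℂ}
    (hF : HasDerivAt F F' z) (hG : HasDerivAt G G' z)
    (hC : (fun w => F w + conj (G w)) =ᶠ[𝓝 z] fun _ => C) : F' = 0 ∧ G' = 0 := by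
  have hsum := (hF.hasFDerivAt.restrictScalars ℝ).add (hG.hasFDerivAt.restrictScalars ℝ).star
  have hzero := (hasFDerivAt_const (𝕜 := ℝ) C z).congr_of_eventuallyEq hC
  refine eq_zero_of_forall_mul_add_conj_mul_eq_zero fun v => ?_
  simpa using congrArg (· v) (hsum.unique hzero)

lemma norm_sq_sub_norm_sq_mul_deriv_eq_zero {f g : ℂ → ℂ} {a b C z : ℂ}
    (hf : DifferentiableAt ℂ f z) (hg : DifferentiableAt ℂ g z)
    (hC : ∀ᶠ w in 𝓝 z, a * (f w + conj (g w)) + b * conj (f w + conj (g w)) = C) :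
    ((‖a‖ ^ 2 - ‖b‖ ^ 2 : ℝ) : ℂ) * deriv f z = 0 := by
  have hsplit : (fun w => (a * f w + b * g w) + conj (conj b * f w + conj a * g w))
      =ᶠ[𝓝 z] fun _ => C := by
    filter_upwards [hC] with w hw
    rw [← hw]
    simp only [map_add, map_mul, conj_conj]
    ring
  obtain ⟨hF', hG'⟩ := HasDerivAt.eq_zero_of_add_conj_eventuallyEq_const
    ((hf.hasDerivAt.const_mul a).add (hg.hasDerivAt.const_mul b))
    ((hf.hasDerivAt.const_mul (conj b)).add (hg.hasDerivAt.const_mul (conj a))) hsplit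
  push_cast
  rw [← conj_mul', ← conj_mul']
  linear_combination conj a * hF' - b * hG'

end Complex

/-- If a(f + ḡ) + b·conj(f + ḡ) is constant on the unit disk, with f, g holomorphic,
then (|a|² - |b|²) f' = 0 on the disk; in particular if |a| ≠ |b| then f is constant. -/
theorem statement14 (f g : ℂ → ℂ) (a b : ℂ)
    (hf : DifferentiableOn ℂ f (ball (0 : ℂ) 1))
    (hg : DifferentiableOn ℂ g (ball (0 : ℂ) 1))
    (hconst : ∃ C : ℂ, ∀ z ∈ ball (0 : ℂ) 1,
      a * (f z + starRingEnd ℂ (g z)) + b * starRingEnd ℂ (f z + starRingEnd ℂ (g z)) = C) :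
    (∀ z ∈ ball (0 : ℂ) 1,
      ((‖a‖ ^ 2 - ‖b‖ ^ 2 : ℝ) : ℂ) * deriv f z = 0)
    ∧ (‖a‖ ≠ ‖b‖ →
      ∀ z ∈ ball (0 : ℂ) 1, ∀ w ∈ ball (0 : ℂ) 1, f z = f w) := by
  obtain ⟨C, hC⟩ := hconst
  have hderiv : ∀ z ∈ ball (0 : ℂ) 1, ((‖a‖ ^ 2 - ‖b‖ ^ 2 : ℝ) : ℂ) * deriv f z = 0 :=
    fun z hz => norm_sq_sub_norm_sq_mul_deriv_eq_zero
      (hf.differentiableAt (isOpen_ball.mem_nhds hz))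
      (hg.differentiableAt (isOpen_ball.mem_nhds hz))
      (eventually_of_mem (isOpen_ball.mem_nhds hz) hC)
  refine ⟨hderiv, fun hab z hz w hw => ?_⟩
  have hne : ((‖a‖ ^ 2 - ‖b‖ ^ 2 : ℝ) : ℂ) ≠ 0 := by
    rw [ofReal_ne_zero, sub_ne_zero]
    exact fun h => hab ((pow_left_inj₀ (norm_nonneg a) (norm_nonneg b) two_ne_zero).mp h)
  exact isOpen_ball.is_const_of_deriv_eq_zero (convex_ball 0 1).isPreconnected hf
    (fun x hx => (mul_eq_zero.mp (hderiv x hx)).resolve_left hne) hz hw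
end

section
/- Let f, g be holomorphic functions on the open unit disk 𝔻 ⊆ ℂ, let a, b ∈ ℂ with (a, b) ≠ (0, 0), and set φ := f + conj(g). Assume f is not constant on 𝔻 and that the function z ↦ a·φ(z) + b·conj(φ(z)) is constant on 𝔻. Then |a| = |b| > 0, and, setting λ := b/a, one has |λ| = 1 and the function z ↦ φ(z) + λ·conj(φ(z)) is constant on 𝔻. -/
/-!
Write `F := a f + b g` and `G := b̄ f + ā g`. Then `a φ + b φ̄ = F + Ḡ`, so if this is constant then
`Ḡ = const - F` is holomorphic together with `G`. A holomorphic function whose conjugate is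
holomorphic has real derivative both `ℂ`-linear and `ℂ`-antilinear, hence vanishing; so `G`, and
then `F`, is constant on the disk. Since `ā F - b G = (|a|² - |b|²) f` and `f` is not constant,
`|a| = |b|`, which is then nonzero, and `φ + (b/a) φ̄ = (a φ + b φ̄) / a` is constant.
-/

open Complex Metric ComplexConjugate

theorem deriv_eq_zero_of_differentiableAt_conj {G : ℂ → ℂ} {z : ℂ}
    (hG : DifferentiableAt ℂ G z) (hG' : DifferentiableAt ℂ (fun w => conj (G w)) z) :
    deriv G z = 0 := by
  have h := (conjCLE.hasFDerivAt.comp z (hG.hasDerivAt.hasFDerivAt.restrictScalars ℝ)).unique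
    (hG'.hasDerivAt.hasFDerivAt.restrictScalars ℝ)
  have h₁ := congrArg (· 1) h
  have hI := congrArg (· I) h
  simp only [ContinuousLinearMap.comp_apply, ContinuousLinearMap.coe_restrictScalars',
    ContinuousLinearMap.toSpanSingleton_apply, smul_eq_mul, one_mul, ContinuousLinearEquiv.coe_coe,
    ContinuousAlgEquiv.coeCLE_apply, conjCAE_apply, map_mul, conj_I, neg_mul] at h₁ hI
  have h₂ : (2 * I) * conj (deriv G z) = 0 := by linear_combination -hI + I * h₁
  simpa [I_ne_zero] using h₂

theorem IsOpen.is_const_of_differentiableOn_conj {U : Set ℂ} {G : ℂ → ℂ} (hU : IsOpen U)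
    (hU' : IsPreconnected U) (hG : DifferentiableOn ℂ G U)
    (hG' : DifferentiableOn ℂ (fun w => conj (G w)) U) {z w : ℂ} (hz : z ∈ U) (hw : w ∈ U) :
    G z = G w :=
  hU.is_const_of_deriv_eq_zero hU' hG (fun _ hx => deriv_eq_zero_of_differentiableAt_conj
    (hG.differentiableAt (hU.mem_nhds hx)) (hG'.differentiableAt (hU.mem_nhds hx))) hz hw

theorem IsOpen.is_const_of_add_conj_eq_const {U : Set ℂ} {f g : ℂ → ℂ} {c : ℂ} (hU : IsOpen U)
    (hU' : IsPreconnected U) (hf : DifferentiableOn ℂ f U) (hg : DifferentiableOn ℂ g U)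
    (hfg : ∀ z ∈ U, f z + conj (g z) = c) {z w : ℂ} (hz : z ∈ U) (hw : w ∈ U) :
    f z = f w ∧ g z = g w := by
  have hg' : ∀ z ∈ U, conj (g z) = c - f z := fun z hz => by
    rw [← hfg z hz]; ring
  have hgc : g z = g w := hU.is_const_of_differentiableOn_conj hU' hg
    (((differentiableOn_const c).sub hf).congr hg') hz hw
  have hfg' := (hfg z hz).trans (hfg w hw).symm
  rw [hgc, add_left_inj] at hfg'
  exact ⟨hfg', hgc⟩

theorem eq_of_mul_add_mul_eq_of_norm_ne {a b x x' y y' : ℂ} (hab : ‖a‖ ≠ ‖b‖)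
    (h₁ : a * x + b * y = a * x' + b * y')
    (h₂ : conj b * x + conj a * y = conj b * x' + conj a * y') : x = x' := by
  have hdet : (normSq a - normSq b : ℂ) ≠ 0 := by
    rw [sub_ne_zero, Ne, ofReal_inj, normSq_eq_norm_sq, normSq_eq_norm_sq]
    exact (pow_left_inj₀ (norm_nonneg a) (norm_nonneg b) two_ne_zero).not.mpr hab
  have h : (normSq a - normSq b : ℂ) * (x - x') = 0 := by
    rw [normSq_eq_conj_mul_self, normSq_eq_conj_mul_self]
    linear_combination conj a * h₁ - b * h₂
  exact sub_eq_zero.mp ((mul_eq_zero.mp h).resolve_left hdet)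

/-- If φ = f + ḡ with f, g holomorphic on the unit disk, f nonconstant, and
a·φ + b·conj(φ) is constant on the disk with (a,b) ≠ (0,0), then |a| = |b| > 0 and,
with λ := b/a, |λ| = 1 and φ + λ·conj(φ) is constant on the disk. -/
theorem statement16 (f g : ℂ → ℂ) (a b : ℂ) (hab : (a, b) ≠ (0, 0))
    (hf : DifferentiableOn ℂ f (ball (0 : ℂ) 1))
    (hg : DifferentiableOn ℂ g (ball (0 : ℂ) 1))
    (φ : ℂ → ℂ) (hφ : ∀ z : ℂ, φ z = f z + starRingEnd ℂ (g z))
    (hfnc : ¬ (∀ z ∈ ball (0 : ℂ) 1, ∀ w ∈ ball (0 : ℂ) 1, f z = f w))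
    (hconst : ∃ C : ℂ, ∀ z ∈ ball (0 : ℂ) 1,
      a * φ z + b * starRingEnd ℂ (φ z) = C) :
    ‖a‖ = ‖b‖ ∧ 0 < ‖a‖
      ∧ ‖b / a‖ = 1
      ∧ ∃ C : ℂ, ∀ z ∈ ball (0 : ℂ) 1,
          φ z + (b / a) * starRingEnd ℂ (φ z) = C := by
  obtain ⟨C, hC⟩ := hconst
  have hsplit : ∀ z ∈ ball (0 : ℂ) 1,
      (a * f z + b * g z) + conj (conj b * f z + conj a * g z) = C := fun z hz => by
    rw [← hC z hz, hφ]; simp only [map_add, map_mul, conj_conj]; ring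
  have hFG {z w} (hz : z ∈ ball (0 : ℂ) 1) (hw : w ∈ ball (0 : ℂ) 1) :=
    isOpen_ball.is_const_of_add_conj_eq_const (convex_ball (0 : ℂ) 1).isPreconnected
      ((hf.const_mul a).add (hg.const_mul b)) ((hf.const_mul _).add (hg.const_mul _)) hsplit hz hw
  have hnorm : ‖a‖ = ‖b‖ := by
    by_contra hne
    exact hfnc fun z hz w hw =>
      eq_of_mul_add_mul_eq_of_norm_ne hne (hFG hz hw).1 (hFG hz hw).2
  have ha : a ≠ 0 := by
    rintro rfl
    exact hab (by simpa [eq_comm] using hnorm)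
  have hb : ‖b‖ ≠ 0 := hnorm ▸ norm_ne_zero_iff.mpr ha
  refine ⟨hnorm, norm_pos_iff.mpr ha, by rw [norm_div, hnorm, div_self hb], C / a, fun z hz => ?_⟩
  rw [← hC z hz]
  field_simp
end

section
/- Let m, n, p, q ∈ ℕ with 1 ≤ m < n, 1 ≤ p < q and n − m = q − p, let α, β, γ, δ ∈ ℂ with (α, β, γ, δ) ≠ (0, 0, 0, 0), and set φ(z) := α z^n + β z^m + γ z̄^p + δ z̄^q. Then there exists λ ∈ ℂ with |λ| = 1 such that the function z ↦ φ(z) + λ·conj(φ(z)) is constant on the open unit disk 𝔻 if and only if there exists λ ∈ ℂ with |λ| = 1 such that exactly one of the following holds: (i) p = n, β = δ = 0 and γ = −λ·conj(α) (so φ = α z^n − λ·conj(α) z̄^n); (ii) p = m (hence q = n), γ = −λ·conj(β) and δ = −λ·conj(α) (so φ = α z^n + β z^m − λ·(conj(α) z̄^n + conj(β) z̄^m)); or (iii) q = m, α = γ = 0 and δ = −λ·conj(β) (so φ = β z^m − λ·conj(β) z̄^m). (By a theorem of Axler and Čučković, for harmonic bounded φ this condition, for the nonconstant φ above, characterizes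 the normality of the Toeplitz operator T_φ on the Bergman space A²(𝔻).) -/
/-!
Write `φ + λ·conj φ` as `A(z) + B(z̄)` with polynomials `A`, `B`. Restricted to the ray through a
unimodular `ω` this is a polynomial in the radius, so constancy on the disk forces
`A_k ω^k + B_k ω̄^k = 0` on the circle for every `k ≥ 1`; testing `ω = 1` and `ω^k = i` gives
`A_k = B_k = 0`. The coefficient of `z̄^k` is `λ·conj α [k = n] + λ·conj β [k = m] + γ [k = p] +
δ [k = q]`, and `n - m = q - p` leaves only four coincidence patterns among the exponents: they
give (i), (ii), (iii), or `φ = 0`. Conversely, in each case `φ = ψ - λ·conj ψ`, which is killed by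
`φ ↦ φ + λ·conj φ` since `λ·conj λ = 1`.
-/

open Complex Metric Polynomial ComplexConjugate

theorem Polynomial.eq_zero_of_forall_eval_ofReal_Ioo (P : ℂ[X])
    (h : ∀ t ∈ Set.Ioo (0 : ℝ) 1, P.eval (t : ℂ) = 0) : P = 0 := by
  refine P.eq_zero_of_infinite_isRoot (Set.Infinite.mono ?_
    ((Set.Ioo_infinite zero_lt_one).image ofReal_injective.injOn))
  rintro _ ⟨t, ht, rfl⟩
  exact h t ht

theorem Complex.eq_zero_of_mul_pow_add_mul_conj_pow_eq_zero {s t : ℂ} {k : ℕ} (hk : k ≠ 0)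
    (h : ∀ ω : ℂ, ‖ω‖ = 1 → s * ω ^ k + t * conj ω ^ k = 0) : s = 0 ∧ t = 0 := by
  obtain ⟨ω, hω⟩ := IsAlgClosed.exists_pow_nat_eq I (Nat.pos_of_ne_zero hk)
  have hω1 : ‖ω‖ = 1 := by
    rw [← pow_left_inj₀ (norm_nonneg ω) zero_le_one hk, ← norm_pow, hω, norm_I, one_pow]
  have h1 := h 1 (by simp)
  have hI := h ω hω1
  rw [← map_pow, hω, conj_I] at hI
  simp only [one_pow, map_one, mul_one] at h1
  have hst : s = t := mul_right_cancel₀ I_ne_zero (by linear_combination hI)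
  exact ⟨by linear_combination h1 / 2 + hst / 2, by linear_combination h1 / 2 - hst / 2⟩

theorem Polynomial.coeff_eq_zero_of_eval_add_eval_conj_eq_const (a b : ℂ[X]) (c : ℂ)
    (h : ∀ z ∈ ball (0 : ℂ) 1, a.eval z + b.eval (conj z) = c) {k : ℕ} (hk : k ≠ 0) :
    a.coeff k = 0 ∧ b.coeff k = 0 := by
  refine eq_zero_of_mul_pow_add_mul_conj_pow_eq_zero hk fun ω hω => ?_
  -- restricted to the radius through `ω`, the function is a polynomial in `t`
  have hray : a.comp (C ω * X) + b.comp (C (conj ω) * X) - C c = 0 := by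
    refine eq_zero_of_forall_eval_ofReal_Ioo _ fun t ht => ?_
    have htω : (t : ℂ) * ω ∈ ball (0 : ℂ) 1 := by
      rw [mem_ball_zero_iff, norm_mul, hω, mul_one, norm_real, Real.norm_of_nonneg ht.1.le]
      exact ht.2
    have := h _ htω
    rw [map_mul, conj_ofReal, mul_comm (t : ℂ), mul_comm (t : ℂ)] at this
    simp only [eval_sub, eval_add, eval_comp, eval_mul, eval_C, eval_X]
    linear_combination this
  have := congrArg (coeff · k) hray
  simpa only [coeff_sub, coeff_add, comp_C_mul_X_coeff, coeff_C, hk, coeff_zero, if_false,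
    sub_zero] using this

theorem Complex.sub_mul_conj_add_mul_conj_eq_zero {lam : ℂ} (hlam : ‖lam‖ = 1) (w : ℂ) :
    (w - lam * conj w) + lam * conj (w - lam * conj w) = 0 := by
  have : lam * conj lam = 1 := by rw [mul_conj, normSq_eq_norm_sq, hlam]; norm_num
  simp only [map_sub, map_mul, conj_conj]
  linear_combination -w * this

theorem coeff_conj_pow_eq_zero_of_add_mul_conj_eq_const {m n p q : ℕ} {α β γ δ lam c : ℂ}
    {φ : ℂ → ℂ} (hφ : ∀ z, φ z = α * z ^ n + β * z ^ m + γ * conj z ^ p + δ * conj z ^ q)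
    (hc : ∀ z ∈ ball (0 : ℂ) 1, φ z + lam * conj (φ z) = c) {k : ℕ} (hk : k ≠ 0) :
    (if k = n then lam * conj α else 0) + (if k = m then lam * conj β else 0)
      + (if k = p then γ else 0) + (if k = q then δ else 0) = 0 := by
  have := (coeff_eq_zero_of_eval_add_eval_conj_eq_const
    (C α * X ^ n + C β * X ^ m + C (lam * conj γ) * X ^ p + C (lam * conj δ) * X ^ q)
    (C (lam * conj α) * X ^ n + C (lam * conj β) * X ^ m + C γ * X ^ p + C δ * X ^ q) c
    (fun z hz => by
      rw [← hc z hz, hφ]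
      simp only [eval_add, eval_mul, eval_C, eval_pow, eval_X, map_add, map_mul, map_pow,
        conj_conj]
      ring) hk).2
  simpa only [coeff_add, coeff_C_mul_X_pow] using this

/-- Characterization of the symbols φ = α z^n + β z^m + γ z̄^p + δ z̄^q
(1 ≤ m < n, 1 ≤ p < q, n - m = q - p, not identically zero) for which there exists a
unimodular λ with φ + λ·conj(φ) constant on the unit disk — equivalently, for which the
Toeplitz operator T_φ is normal on the Bergman space. -/
theorem statement17 (m n p q : ℕ) (hm : 1 ≤ m) (hmn : m < n) (hp : 1 ≤ p) (hpq : p < q)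
    (hg : n - m = q - p) (α β γ δ : ℂ) (hnz : (α, β, γ, δ) ≠ (0, 0, 0, 0))
    (φ : ℂ → ℂ)
    (hφ : ∀ z : ℂ, φ z = α * z ^ n + β * z ^ m
        + γ * (starRingEnd ℂ z) ^ p + δ * (starRingEnd ℂ z) ^ q) :
    (∃ lam : ℂ, ‖lam‖ = 1 ∧ ∃ C : ℂ, ∀ z ∈ ball (0 : ℂ) 1,
        φ z + lam * starRingEnd ℂ (φ z) = C)
    ↔ ∃ lam : ℂ, ‖lam‖ = 1 ∧
        ((p = n ∧ β = 0 ∧ δ = 0 ∧ γ = -lam * starRingEnd ℂ α)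
          ∨ (p = m ∧ γ = -lam * starRingEnd ℂ β ∧ δ = -lam * starRingEnd ℂ α)
          ∨ (q = m ∧ α = 0 ∧ γ = 0 ∧ δ = -lam * starRingEnd ℂ β)) := by
  constructor
  · rintro ⟨lam, hlam, c, hc⟩
    have hlam0 : lam ≠ 0 := norm_ne_zero_iff.mp (by rw [hlam]; exact one_ne_zero)
    have hcoeff k (hk : k ≠ 0) := coeff_conj_pow_eq_zero_of_add_mul_conj_eq_const hφ hc hk
    have hcn := hcoeff n (by omega)
    have hcm := hcoeff m (by omega)
    have hcp := hcoeff p (by omega)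
    have hcq := hcoeff q (by omega)
    refine ⟨lam, hlam, ?_⟩
    obtain h | ⟨h, _⟩ | h | ⟨_, _, _, _⟩ :
        p = n ∨ (p = m ∧ q = n) ∨ q = m ∨ (p ≠ n ∧ p ≠ m ∧ q ≠ m ∧ q ≠ n) := by omega
    all_goals
      simp (disch := omega) only [↓reduceIte, if_pos, if_neg, zero_add, add_zero]
        at hcn hcm hcp hcq
    · exact Or.inl ⟨h, by simpa [hlam0] using hcm, hcq, by linear_combination hcn⟩
    · exact Or.inr (Or.inl ⟨h, by linear_combination hcm, by linear_combination hcn⟩)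
    · exact Or.inr (Or.inr ⟨h, by simpa [hlam0] using hcn, hcp, by linear_combination hcm⟩)
    · exact absurd (by simp_all) hnz
  · rintro ⟨lam, hlam, hcase⟩
    suffices ∃ ψ : ℂ → ℂ, ∀ z, φ z = ψ z - lam * conj (ψ z) from
      let ⟨ψ, hψ⟩ := this
      ⟨lam, hlam, 0, fun z _ => by rw [hψ]; exact sub_mul_conj_add_mul_conj_eq_zero hlam _⟩
    rcases hcase with ⟨rfl, rfl, rfl, rfl⟩ | ⟨rfl, rfl, rfl⟩ | ⟨rfl, rfl, rfl, rfl⟩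
    · exact ⟨fun z => α * z ^ p, fun z => by rw [hφ]; simp only [map_mul, map_pow]; ring⟩
    · obtain rfl : q = n := by omega
      exact ⟨fun z => α * z ^ q + β * z ^ p,
        fun z => by rw [hφ]; simp only [map_add, map_mul, map_pow]; ring⟩
    · exact ⟨fun z => β * z ^ q, fun z => by rw [hφ]; simp only [map_mul, map_pow]; ring⟩
end
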